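/- arXiv:2509.09429 — 5 statements merged into one kernel-verified Lean document; each statement's English description precedes it below -/
import Mathlib

section
/- Let α > 0 and suppose Z is a stationary (KKT) point. For i ∈ {1,…,N} define Δ₁^{(i)} = Σ_{j∈T₁(i)} (r⁴ − (z_iᵀz_j)²), Δ₂^{(i)} = Σ_{j∈T₂(i)} ((r² − 1/(4α))² − (z_iᵀz_j − 1/(4α))²), and, for k ≠ y(i), Δ^{(i,k)} = Σ_{j∈D(k)} (r⁴ − (z_iᵀz_j)²). Then for every i ∈ {1,…,N}: Δ₁^{(i)} + Δ₂^{(i)} + Σ_{k∈{1,…,K}∖{y(i)}} Δ^{(i,k)} ≥ (1 − 1/d)·N·r⁴. -/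
open Finset
open scoped BigOperators RealInnerProductSpace

/-- The set of indices whose label is `k`. -/
def classSet {N K : ℕ} (y : Fin N → Fin K) (k : Fin K) : Finset (Fin N) :=
  Finset.univ.filter (fun j => y j = k)

/-- `T₂(i)`: the indices `j` with `ŵ i j = 1`. -/
def T2 {N : ℕ} (w : Fin N → Fin N → Bool) (i : Fin N) : Finset (Fin N) :=
  Finset.univ.filter (fun j => w i j = true)

/-- `T₁(i)`: the indices `j` in the class of `i` with `ŵ i j = 0`. -/
def T1 {N K : ℕ} (y : Fin N → Fin K) (w : Fin N → Fin N → Bool) (i : Fin N) :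
    Finset (Fin N) :=
  Finset.univ.filter (fun j => y j = y i ∧ w i j = false)

/-- `ŵ` as a real-valued (0/1) matrix entry. -/
def wR {N : ℕ} (w : Fin N → Fin N → Bool) (i j : Fin N) : ℝ := if w i j then 1 else 0

/-- The `d × N` matrix whose columns are the representations `z i`. -/
def Zmat {N d : ℕ} (z : Fin N → EuclideanSpace ℝ (Fin d)) : Matrix (Fin d) (Fin N) ℝ :=
  Matrix.of fun a i => z i a

/-- The graph Laplacian of the adjacency `a i j = ŵ i j + μ i j`. -/
noncomputable def Lmat {N : ℕ} (w : Fin N → Fin N → Bool) (μ : Fin N → Fin N → ℝ) :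
    Matrix (Fin N) (Fin N) ℝ :=
  Matrix.of fun i j =>
    if i = j then ∑ k ∈ Finset.univ.erase i, (wR w i k + μ i k) else -(wR w i j + μ i j)

/-- The feature correlation matrix `C = (1/N) ∑ i, z i (z i)ᵀ`. -/
noncomputable def Cmat {N d : ℕ} (z : Fin N → EuclideanSpace ℝ (Fin d)) :
    Matrix (Fin d) (Fin d) ℝ :=
  ((N : ℝ))⁻¹ • ∑ i, Matrix.of (fun a b => z i a * z i b)

/-- Stationarity (KKT) equation `Z L + 2 α N (C − (r²/d) I_d) Z = 0`
for the multipliers `μ`. -/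
def IsKKT {N d : ℕ} (z : Fin N → EuclideanSpace ℝ (Fin d)) (w : Fin N → Fin N → Bool)
    (μ : Fin N → Fin N → ℝ) (α r : ℝ) : Prop :=
  Zmat z * Lmat w μ + (2 * α * (N : ℝ)) •
    ((Cmat z - (r ^ 2 / (d : ℝ)) • (1 : Matrix (Fin d) (Fin d) ℝ)) * Zmat z) = 0

/-!
Multiplying the stationarity equation on the left by `Zᵀ` turns it into an identity for the Gram
matrix `G = ZᵀZ`, namely `G L + 2α (G² - (N r² / d) G) = 0`. Its `i`-th diagonal entry reads
`∑_{j ≠ i} a_ij (r² - ⟪z_i, z_j⟫) = 2α (N r⁴ / d - ∑_j ⟪z_i, z_j⟫²)`, and since `μ ≥ 0` and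
`⟪z_i, z_j⟫ ≤ r²`, the left side dominates `B = ∑_{j ∈ T₂(i)} (r² - ⟪z_i, z_j⟫)`.
Completing the square gives `Δ₂ = ∑_{j ∈ T₂(i)} (r⁴ - ⟪z_i, z_j⟫²) - B / (2α)`, and as `T₁(i)`,
`T₂(i)` and the other classes partition the indices, the left side of the claim equals
`N r⁴ - ∑_j ⟪z_i, z_j⟫² - B / (2α) ≥ N r⁴ - N r⁴ / d`.
-/

section

open Matrix

variable {N d : ℕ}

theorem transpose_Zmat_mul_Zmat (z : Fin N → EuclideanSpace ℝ (Fin d)) :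
    (Zmat z)ᵀ * Zmat z = gram ℝ z := by
  ext i j
  simp [Matrix.mul_apply, Zmat, PiLp.inner_apply, mul_comm]

theorem Cmat_eq_smul_Zmat_mul_transpose (z : Fin N → EuclideanSpace ℝ (Fin d)) :
    Cmat z = (N : ℝ)⁻¹ • (Zmat z * (Zmat z)ᵀ) := by
  ext a b
  simp [Cmat, Matrix.sum_apply, Matrix.mul_apply, Zmat]

theorem gram_mul_gram_apply_self (z : Fin N → EuclideanSpace ℝ (Fin d)) (i : Fin N) :
    (gram ℝ z * gram ℝ z) i i = ∑ j, ⟪z i, z j⟫ ^ 2 := by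
  simp only [Matrix.mul_apply, gram_apply, real_inner_comm (z i), sq]

theorem mul_Lmat_apply_self {w : Fin N → Fin N → Bool} {μ : Fin N → Fin N → ℝ}
    (hw : ∀ i j, w i j = w j i) (hμ : ∀ i j, μ i j = μ j i)
    (G : Matrix (Fin N) (Fin N) ℝ) (i : Fin N) :
    (G * Lmat w μ) i i = ∑ j ∈ univ.erase i, (wR w i j + μ i j) * (G i i - G i j) := by
  rw [Matrix.mul_apply, ← add_sum_erase _ _ (mem_univ i), Lmat, of_apply, if_pos rfl,
    mul_sum, ← sum_add_distrib]
  refine sum_congr rfl fun j hj => ?_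
  rw [of_apply, if_neg (ne_of_mem_erase hj), wR, wR, hw, hμ]
  ring

theorem IsKKT.gram_mul_Lmat_add {z : Fin N → EuclideanSpace ℝ (Fin d)}
    {w : Fin N → Fin N → Bool} {μ : Fin N → Fin N → ℝ} {α r : ℝ} (h : IsKKT z w μ α r) :
    gram ℝ z * Lmat w μ + (2 * α * N) •
      ((N : ℝ)⁻¹ • (gram ℝ z * gram ℝ z) - (r ^ 2 / d) • gram ℝ z) = 0 := by
  have := congrArg ((Zmat z)ᵀ * ·) h
  simp only [Matrix.mul_add, Matrix.mul_smul, Matrix.sub_mul, Matrix.mul_sub,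
    Cmat_eq_smul_Zmat_mul_transpose, Matrix.smul_mul, Matrix.one_mul, Matrix.mul_zero] at this
  simpa only [← Matrix.mul_assoc, transpose_Zmat_mul_Zmat, Matrix.mul_assoc (gram ℝ z)] using this

theorem IsKKT.sum_adj_mul_sub_inner {z : Fin N → EuclideanSpace ℝ (Fin d)}
    {w : Fin N → Fin N → Bool} {μ : Fin N → Fin N → ℝ} {α r : ℝ} (h : IsKKT z w μ α r)
    (hw : ∀ i j, w i j = w j i) (hμ : ∀ i j, μ i j = μ j i) (i : Fin N) :
    ∑ j ∈ univ.erase i, (wR w i j + μ i j) * (⟪z i, z i⟫ - ⟪z i, z j⟫) =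
      2 * α * (N * (r ^ 2 / d) * ⟪z i, z i⟫ - ∑ j, ⟪z i, z j⟫ ^ 2) := by
  have hN : (N : ℝ) ≠ 0 := Nat.cast_ne_zero.2 (Fin.pos i).ne'
  have hentry := congrFun (congrFun h.gram_mul_Lmat_add i) i
  simp only [Matrix.add_apply, Matrix.smul_apply, Matrix.sub_apply, smul_eq_mul,
    mul_Lmat_apply_self hw hμ, gram_mul_gram_apply_self, gram_apply, Matrix.zero_apply] at hentry
  field_simp at hentry
  linear_combination hentry

theorem sum_T2_le_sum_adj_mul {w : Fin N → Fin N → Bool} {μ : Fin N → Fin N → ℝ} {i : Fin N}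
    (hμ : ∀ j, j ≠ i → 0 ≤ μ i j) {f : Fin N → ℝ} (hf : ∀ j, 0 ≤ f j) (hfi : f i = 0) :
    ∑ j ∈ T2 w i, f j ≤ ∑ j ∈ univ.erase i, (wR w i j + μ i j) * f j :=
  calc ∑ j ∈ T2 w i, f j = ∑ j, wR w i j * f j := by simp [T2, wR, sum_filter, ite_mul]
    _ = ∑ j ∈ univ.erase i, wR w i j * f j := by
      rw [← add_sum_erase _ _ (mem_univ i), hfi, mul_zero, zero_add]
    _ ≤ _ := sum_le_sum fun j hj =>
      mul_le_mul_of_nonneg_right (le_add_of_nonneg_right (hμ j (ne_of_mem_erase hj))) (hf j)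

theorem sum_T1_add_sum_T2_add_sum_classSet_erase {M : Type*} [AddCommMonoid M] {K : ℕ}
    {y : Fin N → Fin K} {w : Fin N → Fin N → Bool} (hcls : ∀ i j, w i j = true → y i = y j)
    (i : Fin N) (f : Fin N → M) :
    ∑ j ∈ T1 y w i, f j + ∑ j ∈ T2 w i, f j +
      ∑ k ∈ univ.erase (y i), ∑ j ∈ classSet y k, f j = ∑ j, f j := by
  have hclass : ∑ j ∈ T1 y w i, f j + ∑ j ∈ T2 w i, f j = ∑ j ∈ classSet y (y i), f j := by
    rw [← sum_filter_add_sum_filter_not (classSet y (y i)) (fun j => w i j = false)]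
    congr 1 <;> congr 1 <;> ext j
    · simp [T1, classSet]
    · simpa [T2, classSet] using fun h => (hcls i j h).symm
  rw [hclass, add_sum_erase univ (fun k => ∑ j ∈ classSet y k, f j) (mem_univ _)]
  exact sum_fiberwise univ y f

end

theorem stmt_2_general
    (N d K : ℕ)
    (r : ℝ)
    (z : Fin N → EuclideanSpace ℝ (Fin d)) (hz : ∀ i, ‖z i‖ = r)
    (y : Fin N → Fin K)
    (w : Fin N → Fin N → Bool)
    (hsym : ∀ i j, w i j = w j i)
    (hcls : ∀ i j, w i j = true → y i = y j)
    (α : ℝ) (hα : 0 < α)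
    (hstat : ∃ μ : Fin N → Fin N → ℝ,
      (∀ i j, μ i j = μ j i) ∧ (∀ i, μ i i = 0) ∧
      (∀ i j, i ≠ j → 0 ≤ μ i j) ∧ IsKKT z w μ α r) :
    ∀ i : Fin N,
      (∑ j ∈ T1 y w i, (r ^ 4 - ⟪z i, z j⟫ ^ 2)) +
        (∑ j ∈ T2 w i,
          ((r ^ 2 - 1 / (4 * α)) ^ 2 - (⟪z i, z j⟫ - 1 / (4 * α)) ^ 2)) +
        (∑ k ∈ Finset.univ.erase (y i), ∑ j ∈ classSet y k, (r ^ 4 - ⟪z i, z j⟫ ^ 2))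
      ≥ (1 - 1 / (d : ℝ)) * (N : ℝ) * r ^ 4 := by
  intro i
  obtain ⟨μ, hμsym, -, hμpos, hkkt⟩ := hstat
  have hii : ⟪z i, z i⟫ = r ^ 2 := by rw [real_inner_self_eq_norm_sq, hz]
  have hgap : ∀ j, 0 ≤ r ^ 2 - ⟪z i, z j⟫ := fun j => by
    simpa [hz, sq] using real_inner_le_norm (z i) (z j)
  have hkkt_i := hkkt.sum_adj_mul_sub_inner hsym hμsym i
  rw [hii] at hkkt_i
  have hT2 := sum_T2_le_sum_adj_mul (w := w) (fun j hj => hμpos i j hj.symm) hgap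
    (by rw [hii, sub_self])
  have hΔ₂ : ∑ j ∈ T2 w i, ((r ^ 2 - 1 / (4 * α)) ^ 2 - (⟪z i, z j⟫ - 1 / (4 * α)) ^ 2) =
      ∑ j ∈ T2 w i, (r ^ 4 - ⟪z i, z j⟫ ^ 2) - (2 * α)⁻¹ * ∑ j ∈ T2 w i, (r ^ 2 - ⟪z i, z j⟫) := by
    rw [mul_sum, ← sum_sub_distrib]
    exact sum_congr rfl fun j _ => by field_simp; ring
  have hpart := sum_T1_add_sum_T2_add_sum_classSet_erase hcls i fun j => r ^ 4 - ⟪z i, z j⟫ ^ 2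
  have hsum : ∑ j, (r ^ 4 - ⟪z i, z j⟫ ^ 2) = N * r ^ 4 - ∑ j, ⟪z i, z j⟫ ^ 2 := by
    simp [sum_sub_distrib]
  have hbound : (2 * α)⁻¹ * ∑ j ∈ T2 w i, (r ^ 2 - ⟪z i, z j⟫) ≤
      N * r ^ 4 / d - ∑ j, ⟪z i, z j⟫ ^ 2 := by
    rw [inv_mul_le_iff₀ (by positivity)]
    linear_combination hT2 + hkkt_i
  rw [hΔ₂]
  linear_combination hbound - hpart - hsum

theorem stmt_2
    (N d K : ℕ) (hN : 1 ≤ N) (hd : 1 ≤ d) (hK : 1 ≤ K)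
    (r : ℝ) (hr : 0 < r)
    (z : Fin N → EuclideanSpace ℝ (Fin d)) (hz : ∀ i, ‖z i‖ = r)
    (y : Fin N → Fin K)
    (hD : ∀ k, (classSet y k).Nonempty)
    (w : Fin N → Fin N → Bool)
    (hsym : ∀ i j, w i j = w j i)
    (hdiag : ∀ i, w i i = true)
    (hcls : ∀ i j, w i j = true → y i = y j)
    (α : ℝ) (hα : 0 < α)
    (hstat : ∃ μ : Fin N → Fin N → ℝ,
      (∀ i j, μ i j = μ j i) ∧ (∀ i, μ i i = 0) ∧
      (∀ i j, i ≠ j → 0 ≤ μ i j) ∧ IsKKT z w μ α r) :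
    ∀ i : Fin N,
      (∑ j ∈ T1 y w i, (r ^ 4 - ⟪z i, z j⟫ ^ 2)) +
        (∑ j ∈ T2 w i,
          ((r ^ 2 - 1 / (4 * α)) ^ 2 - (⟪z i, z j⟫ - 1 / (4 * α)) ^ 2)) +
        (∑ k ∈ Finset.univ.erase (y i), ∑ j ∈ classSet y k, (r ^ 4 - ⟪z i, z j⟫ ^ 2))
      ≥ (1 - 1 / (d : ℝ)) * (N : ℝ) * r ^ 4 :=
  stmt_2_general N d K r z hz y w hsym hcls α hα hstat
end

section
/- Let n ≥ 1 be an integer, a < c < b reals, and X_1,…,X_n ∈ [a,b]. Let p ∈ [0,1] satisfy (1/n)·|{i : X_i ≤ c}| ≤ p. Then the population variance V = (1/n) Σ_{i=1}^n (X_i − X̄)², where X̄ = (1/n) Σ_{i=1}^n X_i, satisfies V ≤ p·(c−a)²/4 + (b−c)²/4 + p·(b−a)². -/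
/-!
The mean minimises the sum of squared deviations, so the variance is at most the mean squared
deviation from `m = (c + b) / 2`. A point `X i ≤ c` lies in `[a, b]` together with `m`, so it
contributes at most `(b - a) ^ 2`, and there are at most `p n` of them; a point `X i > c` lies in
`[c, b]`, whose midpoint is `m`, so it contributes at most `(b - c) ^ 2 / 4`.
-/

open Finset

theorem Finset.sum_sq_sub_mean_le {ι : Type*} (s : Finset ι) (f : ι → ℝ) (m : ℝ) :
    ∑ i ∈ s, (f i - (∑ j ∈ s, f j) / #s) ^ 2 ≤ ∑ i ∈ s, (f i - m) ^ 2 := by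
  set μ := (∑ j ∈ s, f j) / #s
  have hdev : ∑ i ∈ s, (f i - μ) = 0 := by
    rcases s.eq_empty_or_nonempty with rfl | hs
    · simp
    · rw [sum_sub_distrib, sum_const, nsmul_eq_mul, mul_div_cancel₀ _ (by positivity), sub_self]
  have hsplit : ∑ i ∈ s, (f i - m) ^ 2
      = ∑ i ∈ s, (f i - μ) ^ 2 + 2 * (μ - m) * ∑ i ∈ s, (f i - μ) + #s * (μ - m) ^ 2 := by
    rw [mul_sum, ← sum_add_distrib, ← nsmul_eq_mul, ← sum_const, ← sum_add_distrib]
    exact sum_congr rfl fun i _ ↦ by ring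
  rw [hsplit, hdev]
  nlinarith [sq_nonneg (μ - m)]

theorem Finset.sum_div_le_mul_of_le {ι : Type*} {s : Finset ι} {f : ι → ℝ} {B n q : ℝ}
    (hf : ∀ i ∈ s, f i ≤ B) (hB : 0 ≤ B) (hn : 0 ≤ n) (hs : #s / n ≤ q) :
    (∑ i ∈ s, f i) / n ≤ q * B :=
  calc (∑ i ∈ s, f i) / n ≤ #s * B / n := by
        gcongr
        simpa using sum_le_card_nsmul s f B hf
    _ = #s / n * B := by ring
    _ ≤ q * B := by gcongr

theorem sq_sub_le_sq_of_mem_Icc {a b x y : ℝ} (hx : x ∈ Set.Icc a b) (hy : y ∈ Set.Icc a b) :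
    (x - y) ^ 2 ≤ (b - a) ^ 2 :=
  sq_le_sq' (by linarith [hx.1, hy.2]) (by linarith [hx.2, hy.1])

theorem sq_sub_midpoint_le {a b x : ℝ} (hx : x ∈ Set.Icc a b) :
    (x - (a + b) / 2) ^ 2 ≤ (b - a) ^ 2 / 4 := by
  nlinarith [hx.1, hx.2]

theorem stmt_5_general
    (n : ℕ) (a c b : ℝ) (hcb : c < b)
    (X : Fin n → ℝ) (hX : ∀ i, X i ∈ Set.Icc a b)
    (p : ℝ)
    (hfrac : ((Finset.univ.filter (fun i => X i ≤ c)).card : ℝ) / (n : ℝ) ≤ p) :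
    (∑ i, (X i - (∑ j, X j) / (n : ℝ)) ^ 2) / (n : ℝ) ≤
      p * (c - a) ^ 2 / 4 + (b - c) ^ 2 / 4 + p * (b - a) ^ 2 := by
  have hp : 0 ≤ p := (div_nonneg (Nat.cast_nonneg _) n.cast_nonneg).trans hfrac
  have hlow : ∀ i ∈ univ.filter (fun i => X i ≤ c), (X i - (c + b) / 2) ^ 2 ≤ (b - a) ^ 2 := by
    intro i hi
    have hc : c ∈ Set.Icc a b := ⟨(hX i).1.trans (mem_filter.1 hi).2, hcb.le⟩
    exact sq_sub_le_sq_of_mem_Icc (hX i) ⟨by linarith [hc.1], by linarith⟩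
  have hhigh : ∀ i ∈ univ.filter (fun i => ¬X i ≤ c), (X i - (c + b) / 2) ^ 2 ≤ (b - c) ^ 2 / 4 :=
    fun i hi ↦ sq_sub_midpoint_le ⟨(not_le.1 (mem_filter.1 hi).2).le, (hX i).2⟩
  have hcard : (#(univ.filter (fun i => ¬X i ≤ c)) : ℝ) / n ≤ 1 :=
    div_le_one_of_le₀ (by exact_mod_cast (card_filter_le _ _).trans (by simp)) n.cast_nonneg
  calc (∑ i, (X i - (∑ j, X j) / (n : ℝ)) ^ 2) / n
      ≤ (∑ i, (X i - (c + b) / 2) ^ 2) / n :=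
        div_le_div_of_nonneg_right (by simpa using univ.sum_sq_sub_mean_le X ((c + b) / 2))
          n.cast_nonneg
    _ = (∑ i ∈ univ.filter (fun i => X i ≤ c), (X i - (c + b) / 2) ^ 2) / n
          + (∑ i ∈ univ.filter (fun i => ¬X i ≤ c), (X i - (c + b) / 2) ^ 2) / n := by
        rw [← add_div, sum_filter_add_sum_filter_not]
    _ ≤ p * (b - a) ^ 2 + 1 * ((b - c) ^ 2 / 4) :=
        add_le_add (sum_div_le_mul_of_le hlow (sq_nonneg _) n.cast_nonneg hfrac)
          (sum_div_le_mul_of_le hhigh (by positivity) n.cast_nonneg hcard)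
    _ ≤ p * (c - a) ^ 2 / 4 + (b - c) ^ 2 / 4 + p * (b - a) ^ 2 := by
        linarith [mul_nonneg hp (sq_nonneg (c - a))]

theorem stmt_5
    (n : ℕ) (hn : 1 ≤ n) (a c b : ℝ) (hac : a < c) (hcb : c < b)
    (X : Fin n → ℝ) (hX : ∀ i, X i ∈ Set.Icc a b)
    (p : ℝ) (hp : p ∈ Set.Icc (0 : ℝ) 1)
    (hfrac : ((Finset.univ.filter (fun i => X i ≤ c)).card : ℝ) / (n : ℝ) ≤ p) :
    (∑ i, (X i - (∑ j, X j) / (n : ℝ)) ^ 2) / (n : ℝ) ≤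
      p * (c - a) ^ 2 / 4 + (b - c) ^ 2 / 4 + p * (b - a) ^ 2 :=
  stmt_5_general n a c b hcb X hX p hfrac
end

section
/- Fix i ∈ {1,…,N} with T₂(i) and T₁(i) nonempty. Let d_T and q_T be reals with r²/3 ≤ d_T ≤ r² and 0 ≤ q_T ≤ 1, and suppose P_{(j,l)∈T₂(i)×T₁(i)}[z_jᵀz_l ≤ d_T] ≤ q_T. Then E_{(j,l)∈T₂(i)×T₁(i)}[z_jᵀz_l] ≥ (3/2)·d_T − (1/2 + √(6 q_T))·r². -/
open Finset
open scoped BigOperators RealInnerProductSpace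

/-- Uniform average of `f` over `S × T`. -/
noncomputable def avg2 {N : ℕ} (S T : Finset (Fin N)) (f : Fin N → Fin N → ℝ) : ℝ :=
  (∑ j ∈ S, ∑ l ∈ T, f j l) / ((S.card : ℝ) * (T.card : ℝ))

open scoped Classical in
/-- The fraction of pairs of `S × T` satisfying `p`. -/
noncomputable def frac2 {N : ℕ} (S T : Finset (Fin N)) (p : Fin N → Fin N → Prop) : ℝ :=
  (((S ×ˢ T).filter (fun q => p q.1 q.2)).card : ℝ) / ((S.card : ℝ) * (T.card : ℝ))

/-! Pairs with `⟪z j, z l⟫ > d_T` contribute at least `d_T` and the remaining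
fraction `p ≤ q_T` at least `-r²`, so the average is at least `d_T - p (d_T + r²) ≥ d_T - 2 q_T r²`.
Finally `d_T ≥ (3/2) d_T - r²/2` because `d_T ≤ r²`, and `2 q_T ≤ √(6 q_T)` because `q_T ≤ 1`. -/

theorem Finset.card_mul_sub_card_filter_mul_le_sum {α : Type*} (s : Finset α) (f : α → ℝ)
    (m t : ℝ) (hm : ∀ x ∈ s, m ≤ f x) [DecidablePred (fun x => f x ≤ t)] :
    #s * t - #(s.filter (fun x => f x ≤ t)) * (t - m) ≤ ∑ x ∈ s, f x := by
  have hlow : #(s.filter (fun x => f x ≤ t)) • m ≤ ∑ x ∈ s.filter (fun x => f x ≤ t), f x :=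
    card_nsmul_le_sum _ _ _ fun x hx => hm x (mem_filter.mp hx).1
  have hhigh : #(s.filter (fun x => ¬ f x ≤ t)) • t ≤ ∑ x ∈ s.filter (fun x => ¬ f x ≤ t), f x :=
    card_nsmul_le_sum _ _ _ fun x hx => (not_le.mp (mem_filter.mp hx).2).le
  have hcard := card_filter_add_card_filter_not (s := s) (fun x => f x ≤ t)
  rw [nsmul_eq_mul] at hlow hhigh
  rw [← sum_filter_add_sum_filter_not s (fun x => f x ≤ t), ← hcard]
  push_cast
  linarith

theorem sub_frac2_mul_le_avg2 {N : ℕ} {S T : Finset (Fin N)} (hS : S.Nonempty) (hT : T.Nonempty)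
    (f : Fin N → Fin N → ℝ) (m t : ℝ) (hm : ∀ j ∈ S, ∀ l ∈ T, m ≤ f j l) :
    t - frac2 S T (fun j l => f j l ≤ t) * (t - m) ≤ avg2 S T f := by
  classical
  have hn : (0 : ℝ) < #S * #T := by positivity
  have key := (S ×ˢ T).card_mul_sub_card_filter_mul_le_sum (fun q => f q.1 q.2) m t
    fun q hq => hm q.1 (mem_product.mp hq).1 q.2 (mem_product.mp hq).2
  rw [card_product, sum_product] at key
  rw [avg2, frac2, le_div_iff₀ hn, sub_mul, div_mul_eq_mul_div, div_mul_eq_mul_div,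
    mul_div_cancel_right₀ _ hn.ne']
  push_cast at key
  rwa [mul_comm t]

theorem neg_sq_le_real_inner_of_norm_eq {E : Type*} [NormedAddCommGroup E] [InnerProductSpace ℝ E]
    {x y : E} {r : ℝ} (hx : ‖x‖ = r) (hy : ‖y‖ = r) : -r ^ 2 ≤ ⟪x, y⟫ := by
  have := neg_le_of_abs_le (abs_real_inner_le_norm x y)
  rwa [hx, hy, ← sq] at this

theorem two_mul_le_sqrt_six_mul {q : ℝ} (hq0 : 0 ≤ q) (hq1 : q ≤ 1) : 2 * q ≤ √(6 * q) :=
  Real.le_sqrt_of_sq_le (by nlinarith)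

theorem stmt_7_general
    (N d K : ℕ)
    (r : ℝ)
    (z : Fin N → EuclideanSpace ℝ (Fin d)) (hz : ∀ i, ‖z i‖ = r)
    (y : Fin N → Fin K)
    (w : Fin N → Fin N → Bool)
    (i : Fin N)
    (hT2 : (T2 w i).Nonempty) (hT1 : (T1 y w i).Nonempty)
    (dT qT : ℝ) (hdT2 : dT ≤ r ^ 2)
    (hqT0 : 0 ≤ qT) (hqT1 : qT ≤ 1)
    (hP : frac2 (T2 w i) (T1 y w i) (fun j l => ⟪z j, z l⟫ ≤ dT) ≤ qT) :
    avg2 (T2 w i) (T1 y w i) (fun j l => ⟪z j, z l⟫) ≥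
      (3 / 2) * dT - (1 / 2 + Real.sqrt (6 * qT)) * r ^ 2 := by
  set p := frac2 (T2 w i) (T1 y w i) (fun j l => ⟪z j, z l⟫ ≤ dT)
  have hp0 : 0 ≤ p := by unfold p frac2; positivity
  have havg := sub_frac2_mul_le_avg2 hT2 hT1 (fun j l => ⟪z j, z l⟫) (-r ^ 2) dT
    fun j _ l _ => neg_sq_le_real_inner_of_norm_eq (hz j) (hz l)
  have hbad : p * (dT - -r ^ 2) ≤ √(6 * qT) * r ^ 2 := calc
    p * (dT - -r ^ 2) ≤ p * (2 * r ^ 2) := by gcongr; linarith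
    _ ≤ qT * (2 * r ^ 2) := by gcongr
    _ = 2 * qT * r ^ 2 := by ring
    _ ≤ √(6 * qT) * r ^ 2 := by gcongr; exact two_mul_le_sqrt_six_mul hqT0 hqT1
  linarith

theorem stmt_7
    (N d K : ℕ) (hN : 1 ≤ N) (hd : 1 ≤ d) (hK : 1 ≤ K)
    (r : ℝ) (hr : 0 < r)
    (z : Fin N → EuclideanSpace ℝ (Fin d)) (hz : ∀ i, ‖z i‖ = r)
    (y : Fin N → Fin K)
    (hD : ∀ k, (classSet y k).Nonempty)
    (w : Fin N → Fin N → Bool)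
    (hsym : ∀ i j, w i j = w j i)
    (hdiag : ∀ i, w i i = true)
    (hcls : ∀ i j, w i j = true → y i = y j)
    (i : Fin N)
    (hT2 : (T2 w i).Nonempty) (hT1 : (T1 y w i).Nonempty)
    (dT qT : ℝ) (hdT1 : r ^ 2 / 3 ≤ dT) (hdT2 : dT ≤ r ^ 2)
    (hqT0 : 0 ≤ qT) (hqT1 : qT ≤ 1)
    (hP : frac2 (T2 w i) (T1 y w i) (fun j l => ⟪z j, z l⟫ ≤ dT) ≤ qT) :
    avg2 (T2 w i) (T1 y w i) (fun j l => ⟪z j, z l⟫) ≥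
      (3 / 2) * dT - (1 / 2 + Real.sqrt (6 * qT)) * r ^ 2 :=
  stmt_7_general N d K r z hz y w i hT2 hT1 dT qT hdT2 hqT0 hqT1 hP
end

section
/- With the definitions of R⁺, R⁻, g, ℓ_AP and ℓ̂_CoTAP below, one has ℓ̂_CoTAP ≤ (1/M) Σ_{i=1}^M γ̃_i · g( ψ_i · |{j : q̂_j < q̂_i and p̂_i ≤ p̂_j}| ), where ψ_i = 1/|{j : q̂_j ≥ q̂_i and p̂_i ≤ p̂_j}| and γ̃_i = Σ_{k : q̂_k ≤ q̂_i} γ(q̂_k)/r_k with r_k = |{j : q̂_j ≥ q̂_k}|. -/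
open Finset
open scoped BigOperators

/-- `R⁺(i, t)`: the number of indices `j` with `q̂ j ≥ t` and `p̂ i ≤ p̂ j`. -/
noncomputable def Rpos {M : ℕ} (phat qhat : Fin M → ℝ) (i : Fin M) (t : ℝ) : ℕ :=
  (Finset.univ.filter (fun j => t ≤ qhat j ∧ phat i ≤ phat j)).card

/-- `R⁻(i, t)`: the number of indices `j` with `q̂ j < t` and `p̂ i ≤ p̂ j`. -/
noncomputable def Rneg {M : ℕ} (phat qhat : Fin M → ℝ) (i : Fin M) (t : ℝ) : ℕ :=
  (Finset.univ.filter (fun j => qhat j < t ∧ phat i ≤ phat j)).card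

/-- `g x = x / (1 + x)`. -/
noncomputable def g (x : ℝ) : ℝ := x / (1 + x)

/-- The AP loss at threshold `t`. -/
noncomputable def lAP {M : ℕ} (phat qhat : Fin M → ℝ) (t : ℝ) : ℝ :=
  (((Finset.univ.filter (fun i : Fin M => t ≤ qhat i)).card : ℝ))⁻¹ *
    ∑ i ∈ Finset.univ.filter (fun i : Fin M => t ≤ qhat i),
      g ((Rneg phat qhat i t : ℝ) / (Rpos phat qhat i t : ℝ))

/-- The continuous-target AP loss. -/
noncomputable def lCoTAP {M : ℕ} (phat qhat : Fin M → ℝ) (γ : ℝ → ℝ) : ℝ :=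
  ((M : ℝ))⁻¹ * ∑ k, γ (qhat k) * lAP phat qhat (qhat k)

/-!
For a fixed `i`, the counts `R⁺(i,t)` and `R⁻(i,t)` split the `N_i` indices `j` with
`p̂ i ≤ p̂ j` according to `q̂ j ≥ t`, so `g (R⁻/R⁺) = R⁻/(R⁺ + R⁻) = R⁻(i,t)/N_i`, which is
monotone in `t`. Exchanging the two sums in `ℓ̂_CoTAP`, every threshold `q̂ k` at which `i`
contributes satisfies `q̂ k ≤ q̂ i`, so each term is bounded by its value at `t = q̂ i`.
-/

lemma g_div {a b : ℝ} (ha : 0 ≤ a) (hb : 0 < b) : g (a / b) = a / (b + a) := by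
  have : 0 < b + a := by linarith
  unfold g
  field_simp

section Ranks

variable {M : ℕ} (phat qhat : Fin M → ℝ) (i : Fin M)

lemma Rpos_add_Rneg (t : ℝ) :
    Rpos phat qhat i t + Rneg phat qhat i t = #{j | phat i ≤ phat j} := by
  rw [← card_filter_add_card_filter_not (fun j => t ≤ qhat j), filter_filter, filter_filter]
  simp only [Rpos, Rneg, not_le, and_comm]

lemma Rpos_pos {t : ℝ} (ht : t ≤ qhat i) : 0 < Rpos phat qhat i t :=
  card_pos.mpr ⟨i, by simp [ht]⟩

lemma Rneg_mono : Monotone (Rneg phat qhat i) := fun _ _ hst =>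
  card_le_card <| monotone_filter_right _ fun _ _ hj => ⟨hj.1.trans_le hst, hj.2⟩

lemma g_Rneg_div_Rpos {t : ℝ} (ht : t ≤ qhat i) :
    g ((Rneg phat qhat i t : ℝ) / Rpos phat qhat i t) =
      (Rneg phat qhat i t : ℝ) / #{j | phat i ≤ phat j} := by
  rw [g_div (Nat.cast_nonneg _) (by exact_mod_cast Rpos_pos phat qhat i ht),
    ← Rpos_add_Rneg phat qhat i t]
  push_cast
  rfl

lemma g_Rneg_div_Rpos_mono {s t : ℝ} (hst : s ≤ t) (ht : t ≤ qhat i) :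
    g ((Rneg phat qhat i s : ℝ) / Rpos phat qhat i s) ≤
      g ((Rneg phat qhat i t : ℝ) / Rpos phat qhat i t) := by
  rw [g_Rneg_div_Rpos phat qhat i (hst.trans ht), g_Rneg_div_Rpos phat qhat i ht]
  gcongr
  exact Rneg_mono phat qhat i hst

end Ranks

lemma lCoTAP_eq_sum_sum {M : ℕ} (phat qhat : Fin M → ℝ) (γ : ℝ → ℝ) :
    lCoTAP phat qhat γ = (M : ℝ)⁻¹ * ∑ i, ∑ k ∈ {k | qhat k ≤ qhat i},
      γ (qhat k) / #{j | qhat k ≤ qhat j} *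
        g ((Rneg phat qhat i (qhat k) : ℝ) / Rpos phat qhat i (qhat k)) := by
  unfold lCoTAP lAP
  congr 1
  refine (sum_congr rfl fun k _ => ?_).trans <|
    sum_comm' (t := fun k => {i | qhat k ≤ qhat i}) fun k i => by simp
  rw [mul_sum, mul_sum]
  refine sum_congr rfl fun i _ => ?_
  ring

theorem stmt_12_general
    (M : ℕ) (phat qhat : Fin M → ℝ)
    (γ : ℝ → ℝ) (hγ : ∀ t, 0 ≤ γ t) :
    lCoTAP phat qhat γ ≤
      ((M : ℝ))⁻¹ * ∑ i,
        (∑ k ∈ Finset.univ.filter (fun k : Fin M => qhat k ≤ qhat i),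
            γ (qhat k) / ((Finset.univ.filter (fun j : Fin M => qhat k ≤ qhat j)).card : ℝ)) *
          g (((Rpos phat qhat i (qhat i) : ℝ))⁻¹ * (Rneg phat qhat i (qhat i) : ℝ)) := by
  rw [lCoTAP_eq_sum_sum]
  gcongr with i _
  rw [sum_mul]
  gcongr with k hk
  · exact div_nonneg (hγ _) (Nat.cast_nonneg _)
  · rw [inv_mul_eq_div]
    exact g_Rneg_div_Rpos_mono phat qhat i (mem_filter.mp hk).2 le_rfl

theorem stmt_12
    (M : ℕ) (hM : 1 ≤ M) (phat qhat : Fin M → ℝ)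
    (γ : ℝ → ℝ) (hγ : ∀ t, 0 ≤ γ t) :
    lCoTAP phat qhat γ ≤
      ((M : ℝ))⁻¹ * ∑ i,
        (∑ k ∈ Finset.univ.filter (fun k : Fin M => qhat k ≤ qhat i),
            γ (qhat k) / ((Finset.univ.filter (fun j : Fin M => qhat k ≤ qhat j)).card : ℝ)) *
          g (((Rpos phat qhat i (qhat i) : ℝ))⁻¹ * (Rneg phat qhat i (qhat i) : ℝ)) :=
  stmt_12_general M phat qhat γ hγ
end

section
/- For any index i ∈ {1,…,M} and any thresholds t, t' ∈ ℝ with t ≤ t' ≤ q̂_i, one has R⁻(i,t)/R⁺(i,t) ≤ R⁻(i,t')/R⁺(i,t'), and consequently g(R⁻(i,t)/R⁺(i,t)) ≤ g(R⁻(i,t')/R⁺(i,t')). (Both R⁺(i,t) and R⁺(i,t') are ≥ 1 since q̂_i ≥ t' ≥ t.) -/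
open Finset
open scoped BigOperators

theorem stmt_13
    (M : ℕ) (hM : 1 ≤ M) (phat qhat : Fin M → ℝ)
    (i : Fin M) (t t' : ℝ) (htt' : t ≤ t') (ht'q : t' ≤ qhat i) :
    (Rneg phat qhat i t : ℝ) / (Rpos phat qhat i t : ℝ) ≤
        (Rneg phat qhat i t' : ℝ) / (Rpos phat qhat i t' : ℝ) ∧
      g ((Rneg phat qhat i t : ℝ) / (Rpos phat qhat i t : ℝ)) ≤
        g ((Rneg phat qhat i t' : ℝ) / (Rpos phat qhat i t' : ℝ)) := by
  have hb' : 1 ≤ Rpos phat qhat i t' := by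
    rw [Rpos, Finset.one_le_card]
    exact ⟨i, Finset.mem_filter.2 ⟨Finset.mem_univ i, ht'q, le_refl _⟩⟩
  have hb : Rpos phat qhat i t' ≤ Rpos phat qhat i t := by
    apply Finset.card_le_card
    intro j hj
    rw [Finset.mem_filter] at *
    exact ⟨hj.1, htt'.trans hj.2.1, hj.2.2⟩
  have ha : Rneg phat qhat i t ≤ Rneg phat qhat i t' := by
    apply Finset.card_le_card
    intro j hj
    rw [Finset.mem_filter] at *
    exact ⟨hj.1, lt_of_lt_of_le hj.2.1 htt', hj.2.2⟩
  have hb'0 : (0:ℝ) < (Rpos phat qhat i t' : ℝ) := by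
    exact_mod_cast lt_of_lt_of_le zero_lt_one hb'
  have hmain : (Rneg phat qhat i t : ℝ) / (Rpos phat qhat i t : ℝ) ≤
      (Rneg phat qhat i t' : ℝ) / (Rpos phat qhat i t' : ℝ) :=
    div_le_div₀ (by positivity) (by exact_mod_cast ha) hb'0 (by exact_mod_cast hb)
  refine ⟨hmain, ?_⟩
  have hx : (0:ℝ) ≤ (Rneg phat qhat i t : ℝ) / (Rpos phat qhat i t : ℝ) := by positivity
  set x := (Rneg phat qhat i t : ℝ) / (Rpos phat qhat i t : ℝ)
  set y := (Rneg phat qhat i t' : ℝ) / (Rpos phat qhat i t' : ℝ)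
  rw [g, g, div_le_div_iff₀ (by linarith) (by linarith)]
  nlinarith
end
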